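/- arXiv:2504.06049 — 3 statements merged into one kernel-verified Lean document; each statement's English description precedes it below -/
import Mathlib

section
/- If X is a regular d-space (and an ENR) with an initial point, then the topological complexity of the underlying space satisfies TC(X) ≤ 2·vTC(X) − 1. -/
open unitInterval Set Topology

noncomputable section

/-- Concatenation of two continuous maps from the unit interval, when the endpoint of the
first is the starting point of the second. -/
def concatCM {X : Type*} [TopologicalSpace X] (γ δ : C(I, X)) (h : γ 1 = δ 0) : C(I, X) :=
  ((⟨γ, rfl, rfl⟩ : Path (γ 0) (γ 1)).trans
    ((⟨δ, rfl, rfl⟩ : Path (δ 0) (δ 1)).cast h rfl)).toContinuousMap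

lemma concatCM_apply {X : Type*} [TopologicalSpace X] (γ δ : C(I, X)) (h : γ 1 = δ 0) (t : I) :
    concatCM γ δ h t =
      if ht : (t : ℝ) ≤ 1 / 2 then γ ⟨2 * t, (unitInterval.mul_pos_mem_iff two_pos).2 ⟨t.2.1, ht⟩⟩
      else δ ⟨2 * t - 1, unitInterval.two_mul_sub_one_mem_iff.2 ⟨(not_le.1 ht).le, t.2.2⟩⟩ := by
  have := Path.trans_apply (⟨γ, rfl, rfl⟩ : Path (γ 0) (γ 1))
    ((⟨δ, rfl, rfl⟩ : Path (δ 0) (δ 1)).cast h rfl) t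
  simpa [concatCM, Path.cast] using this

@[simp] lemma concatCM_zero {X : Type*} [TopologicalSpace X] (γ δ : C(I, X)) (h : γ 1 = δ 0) :
    concatCM γ δ h 0 = γ 0 := by
  simp [concatCM_apply]

@[simp] lemma concatCM_one {X : Type*} [TopologicalSpace X] (γ δ : C(I, X)) (h : γ 1 = δ 0) :
    concatCM γ δ h 1 = δ 1 := by
  rw [concatCM_apply]
  norm_num

lemma comp_concatCM {X Y : Type*} [TopologicalSpace X] [TopologicalSpace Y]
    (f : C(X, Y)) (γ δ : C(I, X)) (h : γ 1 = δ 0) :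
    f.comp (concatCM γ δ h) =
      concatCM (f.comp γ) (f.comp δ) (by simpa using congrArg f h) := by
  ext t
  simp only [ContinuousMap.comp_apply, concatCM_apply]
  split_ifs <;> rfl

lemma monotone_concatCM {Z : Type*} [TopologicalSpace Z] [Preorder Z] {γ δ : C(I, Z)}
    (h : γ 1 = δ 0) (hγ : Monotone γ) (hδ : Monotone δ) : Monotone ⇑(concatCM γ δ h) := by
  intro s t hst
  have hst' : (s : ℝ) ≤ (t : ℝ) := hst
  rw [concatCM_apply, concatCM_apply]
  split_ifs with hs ht ht
  · exact hγ (Subtype.mk_le_mk.2 (by linarith))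
  · calc γ _ ≤ γ 1 := hγ (unitInterval.le_one _)
      _ = δ 0 := h
      _ ≤ δ _ := hδ (unitInterval.nonneg _)
  · exact absurd (hst'.trans ht) hs
  · exact hδ (Subtype.mk_le_mk.2 (by linarith))

/-- A d-space structure on a topological space: a distinguished set of paths containing the
constant paths, closed under concatenation, and closed under pre-composition with
continuous non-decreasing reparametrizations of the interval. -/
structure DStruct (X : Type*) [TopologicalSpace X] where
  paths : Set C(I, X)
  const_mem : ∀ x : X, ContinuousMap.const I x ∈ paths
  concat_mem : ∀ γ ∈ paths, ∀ δ ∈ paths, ∀ h : γ 1 = δ 0, concatCM γ δ h ∈ paths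
  reparam_mem : ∀ γ ∈ paths, ∀ φ : C(I, I), Monotone φ → γ.comp φ ∈ paths

variable {X : Type*} [TopologicalSpace X] {Y : Type*} [TopologicalSpace Y]

/-- The set `Γ_X` of pairs of points joined by a directed path. -/
def dGamma (dX : DStruct X) : Set (X × X) :=
  {q | ∃ γ ∈ dX.paths, γ 0 = q.1 ∧ γ 1 = q.2}

/-- The set `dX(x, x')` of directed paths from `x` to `x'`. -/
def dBetween (dX : DStruct X) (x x' : X) : Set C(I, X) :=
  {γ | γ ∈ dX.paths ∧ γ 0 = x ∧ γ 1 = x'}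

/-- An initial point of a d-space: a point from which there is a directed path to any point. -/
def IsInitialPoint (dX : DStruct X) (x₀ : X) : Prop := ∀ x : X, (x₀, x) ∈ dGamma dX

/-- A d-space is strongly connected if any ordered pair of points is joined by a d-path. -/
def StronglyConnected (dX : DStruct X) : Prop := dGamma dX = Set.univ

/-- A space is a Euclidean Neighbourhood Retract if it embeds in some Euclidean space as a
retract of an open neighbourhood of itself. -/
def IsENR (A : Type*) [TopologicalSpace A] : Prop :=
  ∃ (N : ℕ) (e : A → (Fin N → ℝ)), IsEmbedding e ∧
    ∃ U : Set (Fin N → ℝ), IsOpen U ∧ Set.range e ⊆ U ∧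
      ∃ r : U → A, Continuous r ∧ ∀ (a : A) (h : e a ∈ U), r ⟨e a, h⟩ = a

/-- A subset of a space is an ENR if the corresponding subspace is an ENR. -/
def IsENRSet {Z : Type*} [TopologicalSpace Z] (A : Set Z) : Prop := IsENR A

/-- A subset of `X × X` admits a continuous section of the directed endpoint map
`π⃗ : dX → Γ_X`. -/
def DSecSet (dX : DStruct X) (U : Set (X × X)) : Prop :=
  ∃ s : U → C(I, X), Continuous s ∧
    ∀ u : U, s u ∈ dX.paths ∧ (s u) 0 = u.1.1 ∧ (s u) 1 = u.1.2

/-- The directed topological complexity of a d-space: the smallest number of ENRs covering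
`Γ_X`, each admitting a continuous section of the directed endpoint map. -/
def vTC (dX : DStruct X) : ℕ∞ :=
  sInf {n : ℕ∞ | ∃ m : ℕ, n = (m : ℕ∞) ∧ ∃ U : Fin m → Set (X × X),
    (∀ i, IsENRSet (U i) ∧ DSecSet dX (U i)) ∧ dGamma dX ⊆ ⋃ i, U i}

/-- A subset of `X` admits a continuous section of the evaluation map
`e_X : d₀X → X`, `γ ↦ γ(1)`, where `d₀X` is the space of d-paths starting at `x₀`. -/
def CatSecSet (dX : DStruct X) (x₀ : X) (U : Set X) : Prop :=
  ∃ s : U → C(I, X), Continuous s ∧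
    ∀ u : U, s u ∈ dX.paths ∧ (s u) 0 = x₀ ∧ (s u) 1 = (u : X)

/-- The directed Lusternik–Schnirelmann category of a d-space with initial point `x₀`:
the smallest number of ENRs covering `X`, each admitting a continuous section of the
evaluation map `e_X : d₀X → X`. -/
def vcat (dX : DStruct X) (x₀ : X) : ℕ∞ :=
  sInf {n : ℕ∞ | ∃ m : ℕ, n = (m : ℕ∞) ∧ ∃ U : Fin m → Set X,
    (∀ i, IsENRSet (U i) ∧ CatSecSet dX x₀ (U i)) ∧ ∀ x : X, ∃ i, x ∈ U i}

/-- A subset of `X × X` admits a continuous section of the free path space fibration. -/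
def SecSet (X : Type*) [TopologicalSpace X] (U : Set (X × X)) : Prop :=
  ∃ s : U → C(I, X), Continuous s ∧ ∀ u : U, (s u) 0 = u.1.1 ∧ (s u) 1 = u.1.2

/-- The (Farber) topological complexity of a space, unnormalized convention. -/
def farberTC (X : Type*) [TopologicalSpace X] : ℕ∞ :=
  sInf {n : ℕ∞ | ∃ m : ℕ, n = (m : ℕ∞) ∧ ∃ U : Fin m → Set (X × X),
    (∀ i, IsOpen (U i) ∧ SecSet X (U i)) ∧ ∀ q : X × X, ∃ i, q ∈ U i}

/-- The inclusion of a subset `U ⊆ X` is nullhomotopic. -/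
def NullhomotopicIncl {Z : Type*} [TopologicalSpace Z] (U : Set Z) : Prop :=
  ∃ z₀ : Z, ContinuousMap.Homotopic
    (⟨Subtype.val, continuous_subtype_val⟩ : C(U, Z)) (ContinuousMap.const U z₀)

/-- The Lusternik–Schnirelmann category, unnormalized convention (`cat(point) = 1`). -/
def cat (X : Type*) [TopologicalSpace X] : ℕ∞ :=
  sInf {n : ℕ∞ | ∃ m : ℕ, n = (m : ℕ∞) ∧ ∃ U : Fin m → Set X,
    (∀ i, IsOpen (U i) ∧ NullhomotopicIncl (U i)) ∧ ∀ x : X, ∃ i, x ∈ U i}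

/-- A continuous map is a d-map if it takes d-paths to d-paths. -/
def IsDMap (dX : DStruct X) (dY : DStruct Y) (f : C(X, Y)) : Prop :=
  ∀ γ ∈ dX.paths, f.comp γ ∈ dY.paths

/-- A d-homotopy from `f` to `g`: a continuous homotopy all of whose traces
`t ↦ H(x,t)` are d-paths in the target. -/
def IsDHomotopy (dY : DStruct Y) (f g : C(X, Y)) (H : C(X × I, Y)) : Prop :=
  (∀ x, H (x, 0) = f x) ∧ (∀ x, H (x, 1) = g x) ∧
    ∀ x : X, H.comp ((ContinuousMap.const I x).prodMk (ContinuousMap.id I)) ∈ dY.paths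

/-- Two d-maps are d-homotopic (from `f` to `g`). -/
def DHomotopic (dY : DStruct Y) (f g : C(X, Y)) : Prop :=
  ∃ H : C(X × I, Y), IsDHomotopy dY f g H

/-- A basic dihomotopy equivalence between d-spaces:
d-homotopy inverse d-maps `f, g` together with continuously graded maps `F, G` on the
directed path spaces such that the induced maps on spaces of d-paths between fixed
endpoints are homotopy equivalences. -/
structure BasicDihomotopyEquiv {X : Type*} {Y : Type*} [TopologicalSpace X]
    [TopologicalSpace Y] (dX : DStruct X) (dY : DStruct Y) where
  f : C(X, Y)
  g : C(Y, X)
  f_dmap : IsDMap dX dY f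
  g_dmap : IsDMap dY dX g
  gf_htpy : DHomotopic dX (g.comp f) (ContinuousMap.id X)
  fg_htpy : DHomotopic dY (f.comp g) (ContinuousMap.id Y)
  F : X → X → C(I, Y) → C(I, X)
  F_grade : ∀ x x', (x, x') ∈ dGamma dX →
    ∀ γ ∈ dBetween dY (f x) (f x'), F x x' γ ∈ dBetween dX x x'
  F_cont : Continuous fun q : {q : (X × X) × C(I, Y) //
      q.1 ∈ dGamma dX ∧ q.2 ∈ dBetween dY (f q.1.1) (f q.1.2)} =>
    F q.1.1.1 q.1.1.2 q.1.2
  f_equiv : ∀ x x', (x, x') ∈ dGamma dX →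
    ∃ (Φ : C(↥(dBetween dX x x'), ↥(dBetween dY (f x) (f x'))))
      (Ψ : C(↥(dBetween dY (f x) (f x')), ↥(dBetween dX x x'))),
      (∀ γ, (Φ γ : C(I, Y)) = f.comp (γ : C(I, X))) ∧
      (∀ δ, (Ψ δ : C(I, X)) = F x x' (δ : C(I, Y))) ∧
      (Ψ.comp Φ).Homotopic (ContinuousMap.id _) ∧ (Φ.comp Ψ).Homotopic (ContinuousMap.id _)
  G : Y → Y → C(I, X) → C(I, Y)
  G_grade : ∀ y y', (y, y') ∈ dGamma dY →
    ∀ γ ∈ dBetween dX (g y) (g y'), G y y' γ ∈ dBetween dY y y'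
  G_cont : Continuous fun q : {q : (Y × Y) × C(I, X) //
      q.1 ∈ dGamma dY ∧ q.2 ∈ dBetween dX (g q.1.1) (g q.1.2)} =>
    G q.1.1.1 q.1.1.2 q.1.2
  g_equiv : ∀ y y', (y, y') ∈ dGamma dY →
    ∃ (Φ : C(↥(dBetween dY y y'), ↥(dBetween dX (g y) (g y'))))
      (Ψ : C(↥(dBetween dX (g y) (g y')), ↥(dBetween dY y y'))),
      (∀ γ, (Φ γ : C(I, X)) = g.comp (γ : C(I, Y))) ∧
      (∀ δ, (Ψ δ : C(I, Y)) = G y y' (δ : C(I, X))) ∧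
      (Ψ.comp Φ).Homotopic (ContinuousMap.id _) ∧ (Φ.comp Ψ).Homotopic (ContinuousMap.id _)

/-- The one-point d-space. -/
def unitD : DStruct Unit where
  paths := Set.univ
  const_mem := fun _ => trivial
  concat_mem := fun _ _ _ _ _ => trivial
  reparam_mem := fun _ _ _ _ => trivial

/-- A d-space is dicontractible if it is basic dihomotopy equivalent to a point. -/
def Dicontractible (dX : DStruct X) : Prop := Nonempty (BasicDihomotopyEquiv dX unitD)

/-- Product d-structure: paths whose coordinate projections are d-paths. -/
def DStruct.prod (dX : DStruct X) (dY : DStruct Y) : DStruct (X × Y) where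
  paths := {γ | ContinuousMap.fst.comp γ ∈ dX.paths ∧ ContinuousMap.snd.comp γ ∈ dY.paths}
  const_mem x := by
    constructor
    · have : (ContinuousMap.fst.comp (ContinuousMap.const I x) : C(I, X)) =
        ContinuousMap.const I x.1 := by ext t; rfl
      rw [this]; exact dX.const_mem x.1
    · have : (ContinuousMap.snd.comp (ContinuousMap.const I x) : C(I, Y)) =
        ContinuousMap.const I x.2 := by ext t; rfl
      rw [this]; exact dY.const_mem x.2
  concat_mem γ hγ δ hδ h := by
    constructor
    · rw [comp_concatCM]
      exact dX.concat_mem _ hγ.1 _ hδ.1 _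
    · rw [comp_concatCM]
      exact dY.concat_mem _ hγ.2 _ hδ.2 _
  reparam_mem γ hγ φ hφ := by
    constructor
    · rw [← ContinuousMap.comp_assoc]
      exact dX.reparam_mem _ hγ.1 φ hφ
    · rw [← ContinuousMap.comp_assoc]
      exact dY.reparam_mem _ hγ.2 φ hφ

/-- The continuous inclusion of a subset. -/
def inclCM {Z : Type*} [TopologicalSpace Z] (A : Set Z) : C(↥A, Z) :=
  ⟨Subtype.val, continuous_subtype_val⟩

/-- The d-structure induced on a subspace. -/
def DStruct.restrict (dX : DStruct X) (A : Set X) : DStruct ↥A where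
  paths := {γ | (inclCM A).comp γ ∈ dX.paths}
  const_mem x := by
    have : ((inclCM A).comp (ContinuousMap.const I x) : C(I, X)) =
        ContinuousMap.const I (x : X) := by ext t; rfl
    simpa [Set.mem_setOf_eq, this] using dX.const_mem (x : X)
  concat_mem γ hγ δ hδ h := by
    show (inclCM A).comp _ ∈ dX.paths
    rw [comp_concatCM]
    exact dX.concat_mem _ hγ _ hδ _
  reparam_mem γ hγ φ hφ := by
    show (inclCM A).comp _ ∈ dX.paths
    rw [← ContinuousMap.comp_assoc]
    exact dX.reparam_mem _ hγ φ hφ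

/-- The directed interval `I⃗`: the unit interval with non-decreasing paths. -/
def dInterval : DStruct I where
  paths := {γ | Monotone ⇑γ}
  const_mem x := monotone_const
  concat_mem γ hγ δ hδ h := monotone_concatCM h hγ hδ
  reparam_mem γ hγ φ hφ := hγ.comp hφ

/-- The directed homotopy lifting property of a d-map with respect to every d-space:
a d-fibration. -/
def IsDFibration {E B : Type*} [TopologicalSpace E] [TopologicalSpace B]
    (dE : DStruct E) (dB : DStruct B) (p : C(E, B)) : Prop :=
  IsDMap dE dB p ∧
  ∀ (X : Type) (_ : TopologicalSpace X) (dX : DStruct X) (f : C(X, E)) (φ : C(X × I, B)),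
    IsDMap dX dE f → IsDMap (dX.prod dInterval) dB φ →
    ∀ α : I, (α = 0 ∨ α = 1) → (∀ x, φ (x, α) = p (f x)) →
    ∃ φ' : C(X × I, E), IsDMap (dX.prod dInterval) dE φ' ∧
      (∀ q, p (φ' q) = φ q) ∧ ∀ x, φ' (x, α) = f x

/-- The (Hurewicz) homotopy lifting property with respect to every space: a fibration. -/
def IsFibration {E B : Type*} [TopologicalSpace E] [TopologicalSpace B] (p : C(E, B)) : Prop :=
  ∀ (X : Type) (_ : TopologicalSpace X) (f : C(X, E)) (φ : C(X × I, B)),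
    (∀ x, φ (x, 0) = p (f x)) →
    ∃ φ' : C(X × I, E), (∀ q, p (φ' q) = φ q) ∧ ∀ x, φ' (x, 0) = f x

section Parametrized

variable {E B : Type*} [TopologicalSpace E] [TopologicalSpace B]

/-- The fibre product `E ×_B E`. -/
def EBE (p : C(E, B)) : Set (E × E) := {q | p q.1 = p q.2}

/-- The space `dE_B` of d-paths in `E` lying in a single fibre of `p`. -/
def dEB (dE : DStruct E) (p : C(E, B)) : Set C(I, E) :=
  {γ | γ ∈ dE.paths ∧ ∃ b : B, ∀ t, p (γ t) = b}

/-- The set `Γ_{E,B}` of endpoint pairs of d-paths lying in a single fibre. -/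
def GammaEB (dE : DStruct E) (p : C(E, B)) : Set (E × E) :=
  {q | ∃ γ ∈ dEB dE p, γ 0 = q.1 ∧ γ 1 = q.2}

/-- A subset of `E × E` admits a continuous section of the directed parametrized endpoint
map `Π⃗ : dE_B → Γ_{E,B}`. -/
def DParamSecSet (dE : DStruct E) (p : C(E, B)) (U : Set (E × E)) : Prop :=
  ∃ s : U → C(I, E), Continuous s ∧
    ∀ u : U, s u ∈ dEB dE p ∧ (s u) 0 = u.1.1 ∧ (s u) 1 = u.1.2

/-- The directed parametrized topological complexity of a d-fibration `p : E → B`: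
the smallest number of ENRs covering `Γ_{E,B}`, each admitting a continuous section of
the directed parametrized endpoint map. -/
def vTCp (dE : DStruct E) (p : C(E, B)) : ℕ∞ :=
  sInf {n : ℕ∞ | ∃ m : ℕ, n = (m : ℕ∞) ∧ ∃ U : Fin m → Set (E × E),
    (∀ i, IsENRSet (U i) ∧ DParamSecSet dE p (U i)) ∧ GammaEB dE p ⊆ ⋃ i, U i}

/-- A subset of `E × E` admits a continuous section of the parametrized endpoint map
`Π : E^I_B → E ×_B E`. -/
def ParamSecSet (p : C(E, B)) (U : Set (E × E)) : Prop :=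
  ∃ s : U → C(I, E), Continuous s ∧
    ∀ u : U, (∃ b : B, ∀ t, p ((s u) t) = b) ∧ (s u) 0 = u.1.1 ∧ (s u) 1 = u.1.2

/-- The parametrized topological complexity of a fibration `p : E → B` (Cohen–Farber–
Weinberger): the smallest number of relatively open subsets covering `E ×_B E`, each
admitting a continuous section of the parametrized endpoint map. -/
def TCparam (p : C(E, B)) : ℕ∞ :=
  sInf {n : ℕ∞ | ∃ m : ℕ, n = (m : ℕ∞) ∧ ∃ U : Fin m → Set (E × E),
    (∀ i, U i ⊆ EBE p ∧ IsOpen (Subtype.val ⁻¹' (U i) : Set ↥(EBE p)) ∧ ParamSecSet p (U i)) ∧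
    EBE p ⊆ ⋃ i, U i}

/-- The restriction of `p : E → B` to the preimage of a subset `B' ⊆ B`. -/
def restrictMap (p : C(E, B)) (B' : Set B) : C(↥(p ⁻¹' B'), ↥B') :=
  ⟨fun e => ⟨p e, e.2⟩, by fun_prop⟩

/-- The d-structure `dE_B` on `E` formed by the fibrewise d-paths. -/
def dEBStruct (dE : DStruct E) (p : C(E, B)) : DStruct E where
  paths := dEB dE p
  const_mem x := ⟨dE.const_mem x, ⟨p x, fun _ => rfl⟩⟩
  concat_mem γ hγ δ hδ h := by
    obtain ⟨b, hb⟩ := hγ.2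
    obtain ⟨b', hb'⟩ := hδ.2
    have hbb' : b = b' := by rw [← hb 1, ← hb' 0, h]
    refine ⟨dE.concat_mem _ hγ.1 _ hδ.1 _, ⟨b, fun t => ?_⟩⟩
    rw [concatCM_apply]
    split_ifs
    · exact hb _
    · rw [hbb']; exact hb' _
  reparam_mem γ hγ φ hφ := by
    obtain ⟨b, hb⟩ := hγ.2
    exact ⟨dE.reparam_mem _ hγ.1 φ hφ, ⟨b, fun t => hb (φ t)⟩⟩

/-- The d-structure on the total space associated to a d-structure on the base of a
fibration: a path is directed iff its projection is directed. -/
def assocDStruct (dB : DStruct B) (p : C(E, B)) : DStruct E where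
  paths := {γ | p.comp γ ∈ dB.paths}
  const_mem x := by
    have : (p.comp (ContinuousMap.const I x) : C(I, B)) = ContinuousMap.const I (p x) := by
      ext t; rfl
    simpa [Set.mem_setOf_eq, this] using dB.const_mem (p x)
  concat_mem γ hγ δ hδ h := by
    show p.comp _ ∈ dB.paths
    rw [comp_concatCM]
    exact dB.concat_mem _ hγ _ hδ _
  reparam_mem γ hγ φ hφ := by
    show p.comp _ ∈ dB.paths
    rw [← ContinuousMap.comp_assoc]
    exact dB.reparam_mem _ hγ φ hφ

/-- A d-fibration is d-regular if `Γ_{E,B}` admits a partition realizing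
`vTC[p : E → B]` into pairwise disjoint ENRs with continuous sections whose initial
unions are closed. -/
def IsRegularDFib (dE : DStruct E) (p : C(E, B)) : Prop :=
  ∃ n : ℕ, vTCp dE p = (n : ℕ∞) ∧ ∃ A : Fin n → Set (E × E),
    (∀ i, IsENRSet (A i) ∧ DParamSecSet dE p (A i)) ∧
    (⋃ i, A i) = GammaEB dE p ∧
    (Pairwise fun i j => Disjoint (A i) (A j)) ∧
    ∀ r : Fin n, IsClosed (Subtype.val ⁻¹' (⋃ i, ⋃ (_ : i ≤ r), A i) : Set ↥(GammaEB dE p))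

end Parametrized

/-- A d-space is regular if `Γ_X` admits a partition realizing `vTC(X)` into pairwise
disjoint ENRs with continuous sections whose initial unions are closed. -/
def IsRegularDSpace (dX : DStruct X) : Prop :=
  ∃ n : ℕ, vTC dX = (n : ℕ∞) ∧ ∃ A : Fin n → Set (X × X),
    (∀ i, IsENRSet (A i) ∧ DSecSet dX (A i)) ∧
    (⋃ i, A i) = dGamma dX ∧
    (Pairwise fun i j => Disjoint (A i) (A j)) ∧
    ∀ r : Fin n, IsClosed (Subtype.val ⁻¹' (⋃ i, ⋃ (_ : i ≤ r), A i) : Set ↥(dGamma dX))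

/-- The monotone d-structure on a subset of a (pre)ordered topological space: directed
paths are the paths that are non-decreasing (in each coordinate, for a pi-type order). -/
def monoDStruct {Z : Type*} [TopologicalSpace Z] [Preorder Z] (A : Set Z) : DStruct ↥A where
  paths := {γ | Monotone fun t => ((γ t : Z))}
  const_mem x := fun _ _ _ => le_rfl
  concat_mem γ hγ δ hδ h := by
    have h' : (inclCM A).comp γ 1 = (inclCM A).comp δ 0 := by
      simp [inclCM, h]
    have : Monotone ⇑(concatCM ((inclCM A).comp γ) ((inclCM A).comp δ) h') :=
      monotone_concatCM h' hγ hδ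
    have hcomp := comp_concatCM (inclCM A) γ δ h
    intro s t hst
    have := this hst
    rwa [← hcomp, ContinuousMap.comp_apply, ContinuousMap.comp_apply] at this
  reparam_mem γ hγ φ hφ := hγ.comp hφ

end

/-!
Pulling the regular partition `Γ_X = A₁ ⊔ ⋯ ⊔ A_n` back along `x ↦ (x₀, x)` gives an index
function `φ : X → Fin n` whose sublevel sets `{φ ≤ r}` are closed. Since `X` is an ENR, the
section over each `A i` extends to an open neighbourhood `W i` (retract a neighbourhood onto
`A i`, then join each point to its retraction along a retracted straight segment), and the path
`x ⤳ x₀ ⤳ y` gives a section near `φ⁻¹{i} × φ⁻¹{j}`. For fixed `k` the products with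
`i + j = k` are pairwise separated, so in the completely normal space `X × X` they have disjoint
open neighbourhoods; the union is one open set with a section. The `2n - 1` values of `k` cover
`X × X`.
-/

open Set.Notation

theorem Continuous.concatCM {X T : Type*} [TopologicalSpace X] [TopologicalSpace T]
    {u w : T → C(I, X)} (hu : Continuous u) (hw : Continuous w) (h : ∀ t, u t 1 = w t 0) :
    Continuous fun t => concatCM (u t) (w t) (h t) := by
  refine ContinuousMap.continuous_of_continuous_uncurry _ ?_
  have huc : Continuous fun p : T × I => u p.1 p.2 := by fun_prop
  have hwc : Continuous fun p : T × I => w p.1 p.2 := by fun_prop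
  exact Path.trans_continuous_family (fun t => ⟨u t, rfl, rfl⟩) huc
    (fun t => (⟨w t, rfl, rfl⟩ : Path (w t 0) (w t 1)).cast (h t) rfl) hwc

namespace SecSet

variable {X : Type*} [TopologicalSpace X] {U V : Set (X × X)}

theorem mono (hV : SecSet X V) (hUV : U ⊆ V) : SecSet X U := by
  obtain ⟨s, hs, hse⟩ := hV
  exact ⟨fun u => s (inclusion hUV u), hs.comp (continuous_inclusion hUV), fun u => hse _⟩

theorem of_isEmbedding {T : Type*} [TopologicalSpace T] {j : T → X × X} (hj : IsEmbedding j)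
    {s : T → C(I, X)} (hs : Continuous s) (hse : ∀ t, s t 0 = (j t).1 ∧ s t 1 = (j t).2) :
    SecSet X (range j) := by
  refine ⟨fun u => s (hj.toHomeomorph.symm u), hs.comp hj.toHomeomorph.symm.continuous,
    fun u => ?_⟩
  have hju : j (hj.toHomeomorph.symm u) = u :=
    congrArg Subtype.val (hj.toHomeomorph.apply_symm_apply u)
  rw [← hju]
  exact hse _

theorem iUnion {ι : Type*} {U : ι → Set (X × X)} (hU : ∀ i, IsOpen (U i))
    (hdisj : Pairwise fun i j => Disjoint (U i) (U j)) (hsec : ∀ i, SecSet X (U i)) :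
    SecSet X (⋃ i, U i) := by
  choose s hs hse using hsec
  let S : ι → Set ↥(⋃ i, U i) := fun i => Subtype.val ⁻¹' U i
  let φ : ∀ i, C(S i, C(I, X)) := fun i => ⟨fun q => s i ⟨q.1.1, q.2⟩,
    (hs i).comp ((continuous_subtype_val.comp continuous_subtype_val).subtype_mk _)⟩
  have hagree : ∀ i j (q : ↥(⋃ i, U i)) (hi : q ∈ S i) (hj : q ∈ S j),
      φ i ⟨q, hi⟩ = φ j ⟨q, hj⟩ := by
    intro i j q hi hj
    obtain rfl : i = j := by_contra fun hne => (hdisj hne).ne_of_mem hi hj rfl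
    rfl
  have hcover : ∀ q : ↥(⋃ i, U i), ∃ i, S i ∈ 𝓝 q := fun q =>
    let ⟨i, hi⟩ := mem_iUnion.1 q.2
    ⟨i, ((hU i).preimage continuous_subtype_val).mem_nhds hi⟩
  refine ⟨ContinuousMap.liftCover S φ hagree hcover, ContinuousMap.continuous _, fun q => ?_⟩
  obtain ⟨i, hi⟩ := mem_iUnion.1 q.2
  rw [ContinuousMap.liftCover_coe (i := i) ⟨q, hi⟩]
  exact hse i _

theorem prod_slice (x₀ : X) (hU : SecSet X U) (hV : SecSet X V) :
    SecSet X ((Prod.mk x₀ ⁻¹' U) ×ˢ (Prod.mk x₀ ⁻¹' V)) := by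
  obtain ⟨s, hs, hse⟩ := hU
  obtain ⟨s', hs', hse'⟩ := hV
  let back : ↥((Prod.mk x₀ ⁻¹' U) ×ˢ (Prod.mk x₀ ⁻¹' V)) → C(I, X) := fun q =>
    (s ⟨(x₀, q.1.1), q.2.1⟩).comp ⟨unitInterval.symm, continuous_symm⟩
  let forth : ↥((Prod.mk x₀ ⁻¹' U) ×ˢ (Prod.mk x₀ ⁻¹' V)) → C(I, X) := fun q =>
    s' ⟨(x₀, q.1.2), q.2.2⟩
  have hmeet : ∀ q, back q 1 = forth q 0 := fun q => by
    simp [back, forth, (hse _).1, (hse' _).1]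
  refine ⟨fun q => concatCM (back q) (forth q) (hmeet q), ?_, fun q => ?_⟩
  · refine Continuous.concatCM ((ContinuousMap.continuous_precomp _).comp ?_) ?_ hmeet <;>
      refine Continuous.comp ‹_› (Continuous.subtype_mk ?_ _) <;> fun_prop
  · simp [back, forth, (hse _).2, (hse' _).2]

end SecSet

theorem DSecSet.secSet {X : Type*} [TopologicalSpace X] {dX : DStruct X} {U : Set (X × X)}
    (h : DSecSet dX U) : SecSet X U :=
  let ⟨s, hs, hse⟩ := h
  ⟨s, hs, fun u => (hse u).2⟩

theorem IsENR.metrizableSpace {A : Type*} [TopologicalSpace A] (h : IsENR A) :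
    TopologicalSpace.MetrizableSpace A :=
  let ⟨_, _, he, _⟩ := h
  he.metrizableSpace

theorem IsENR.locallyCompactSpace {A : Type*} [TopologicalSpace A] (h : IsENR A) :
    LocallyCompactSpace A := by
  obtain ⟨N, e, he, U, hU, heU, r, hr, hre⟩ := h
  have hclosed : IsClosed (U ↓∩ range e) := by
    convert isClosed_eq (he.continuous.comp hr) continuous_subtype_val using 1
    ext u
    refine ⟨fun ⟨a, ha⟩ => ?_, fun hu => ⟨r u, hu⟩⟩
    have hu : u = ⟨e a, heU ⟨a, rfl⟩⟩ := Subtype.ext ha.symm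
    simp [hu, hre]
  have hrange : IsLocallyClosed (range e) := by
    simpa [inter_eq_right.2 heU] using
      hclosed.isLocallyClosed.image IsInducing.subtypeVal (by simpa using hU.isLocallyClosed)
  exact he.isInducing.locallyCompactSpace hrange

theorem isLocallyClosed_of_locallyCompactSpace {Z : Type*} [TopologicalSpace Z] [T2Space Z]
    {S : Set Z} [LocallyCompactSpace S] : IsLocallyClosed S := by
  refine ((isLocallyClosed_tfae S).out 0 2).2 fun x hx => ?_
  obtain ⟨K, hK, hKx⟩ := exists_compact_mem_nhds (⟨x, hx⟩ : S)
  obtain ⟨O, hO, hOK⟩ := (mem_nhds_subtype S _ K).1 hKx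
  refine ⟨O, hO, ?_⟩
  convert (hK.image continuous_subtype_val).isClosed.preimage
    (continuous_subtype_val (p := (· ∈ O))) using 1
  ext z
  exact ⟨fun hz => ⟨⟨z, hz⟩, hOK z.2, rfl⟩, fun ⟨y, _, hy⟩ => show z.1 ∈ S from hy ▸ y.2⟩

theorem IsENRSet.exists_retraction {Y : Type*} [TopologicalSpace Y]
    [TopologicalSpace.MetrizableSpace Y] {S : Set Y} (hS : IsENRSet S) :
    ∃ W, IsOpen W ∧ S ⊆ W ∧
      ∃ r : W → S, Continuous r ∧ ∀ w : W, ∀ hw : (w : Y) ∈ S, r w = ⟨w, hw⟩ := by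
  have : LocallyCompactSpace S := IsENR.locallyCompactSpace hS
  have hV : IsOpen (coborder S) := isLocallyClosed_of_locallyCompactSpace.isOpen_coborder
  obtain ⟨M, e, he, U, hU, heU, ρ, hρ, hρe⟩ := hS
  -- `S` is closed in the open set `coborder S`, so Tietze extends `e` to it.
  let eV : C(coborder S ↓∩ S, Fin M → ℝ) := ⟨fun v => e ⟨v.1.1, v.2⟩, by fun_prop⟩
  obtain ⟨g, hg⟩ := eV.exists_restrict_eq isClosed_preimage_val_coborder
  have hgS : ∀ (v : coborder S) (hv : (v : Y) ∈ S), g v = e ⟨v, hv⟩ := fun v hv =>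
    DFunLike.congr_fun hg ⟨v, hv⟩
  have hWV : Subtype.val '' (g ⁻¹' U) ⊆ coborder S :=
    image_subset_range _ _ |>.trans (by simp)
  have hgU : ∀ w : ↥(Subtype.val '' (g ⁻¹' U)), g ⟨w, hWV w.2⟩ ∈ U := by
    rintro ⟨_, v, hv, rfl⟩
    exact hv
  refine ⟨Subtype.val '' (g ⁻¹' U), hV.isOpenMap_subtype_val _ (hU.preimage g.continuous),
    fun y hy => ⟨⟨y, subset_coborder hy⟩, ?_, rfl⟩, fun w => ρ ⟨_, hgU w⟩, ?_, fun w hw => ?_⟩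
  · rw [mem_preimage, hgS _ hy]
    exact heU (mem_range_self _)
  · exact hρ.comp ((g.continuous.comp (continuous_inclusion hWV)).subtype_mk _)
  · simp_rw [hgS ⟨w, hWV w.2⟩ hw]
    exact hρe _ _

theorem IsENR.exists_secSet_nhds_diagonal {X : Type*} [TopologicalSpace X] (hX : IsENR X) :
    ∃ N : Set (X × X), IsOpen N ∧ (∀ x, (x, x) ∈ N) ∧ SecSet X N := by
  obtain ⟨n, e, he, U, hU, heU, ρ, hρ, hρe⟩ := hX
  let seg : X × X → C(I, Fin n → ℝ) := fun q =>
    ⟨fun t => AffineMap.lineMap (e q.1) (e q.2) (t : ℝ), by fun_prop⟩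
  have hseg : Continuous seg :=
    ContinuousMap.continuous_of_continuous_uncurry _
      (show Continuous fun p : (X × X) × I => AffineMap.lineMap (e p.1.1) (e p.1.2) (p.2 : ℝ) by
        have := he.continuous; fun_prop)
  let N : Set (X × X) := {q | MapsTo (seg q) univ U}
  have hN : IsOpen N := (ContinuousMap.isOpen_setOfPred_mapsTo isCompact_univ hU).preimage hseg
  refine ⟨N, hN, fun x t _ => ?_, ?_⟩
  · simpa [seg] using heU (mem_range_self x)
  let F : N × I → X := fun p => ρ ⟨seg p.1 p.2, p.1.2 (mem_univ p.2)⟩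
  have hF : Continuous F := hρ.comp <|
    ((hseg.comp (continuous_subtype_val.comp continuous_fst)).eval continuous_snd).subtype_mk _
  refine ⟨(ContinuousMap.mk F hF).curry, ContinuousMap.continuous _, fun q => ⟨?_, ?_⟩⟩
  · simp [F, seg, hρe]
  · simp [F, seg, hρe]

theorem SecSet.exists_isOpen_superset {X : Type*} [TopologicalSpace X] (hX : IsENR X)
    {S : Set (X × X)} (hS : IsENRSet S) (hsec : SecSet X S) :
    ∃ W, IsOpen W ∧ S ⊆ W ∧ SecSet X W := by
  have := hX.metrizableSpace
  obtain ⟨W₁, hW₁, hSW₁, r, hr, hrS⟩ := hS.exists_retraction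
  obtain ⟨N, hN, hdiag, P, hP, hPe⟩ := hX.exists_secSet_nhds_diagonal
  obtain ⟨s, hs, hse⟩ := hsec
  let Q : Set W₁ :=
    {w | ((w : X × X).1, (r w : X × X).1) ∈ N ∧ ((r w : X × X).2, (w : X × X).2) ∈ N}
  have hQ : IsOpen Q := (hN.preimage (by fun_prop)).inter (hN.preimage (by fun_prop))
  have hSQ : ∀ q (hq : q ∈ S), (⟨q, hSW₁ hq⟩ : W₁) ∈ Q := fun q hq => by
    simp [Q, hrS ⟨q, hSW₁ hq⟩ hq, hdiag]
  let go : Q → C(I, X) := fun w => P ⟨_, w.2.1⟩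
  let mid : Q → C(I, X) := fun w => s (r w)
  let back : Q → C(I, X) := fun w => P ⟨_, w.2.2⟩
  have hgo : ∀ w, go w 1 = mid w 0 := fun w => by simp [go, mid, hPe, hse]
  have hback : ∀ w, concatCM (go w) (mid w) (hgo w) 1 = back w 0 := fun w => by
    simp [go, mid, back, hPe, hse]
  have hrange : Subtype.val '' Q = range (Subtype.val ∘ Subtype.val : Q → X × X) := by
    rw [range_comp, Subtype.range_coe]
  refine ⟨_, hW₁.isOpenMap_subtype_val _ hQ, fun q hq => ⟨_, hSQ q hq, rfl⟩, hrange ▸ ?_⟩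
  refine SecSet.of_isEmbedding (IsEmbedding.subtypeVal.comp IsEmbedding.subtypeVal)
    ((Continuous.concatCM ?_ ?_ hgo).concatCM ?_ hback) fun w => ?_
  · exact hP.comp (Continuous.subtype_mk (by fun_prop) _)
  · exact hs.comp (hr.comp continuous_subtype_val)
  · exact hP.comp (Continuous.subtype_mk (by fun_prop) _)
  · simp [go, back, hPe]

theorem exists_isOpen_pairwise_disjoint_superset {Z ι : Type*} [TopologicalSpace Z]
    [CompletelyNormalSpace Z] [Finite ι] {K : ι → Set Z}
    (hK : Pairwise fun i j => Disjoint (closure (K i)) (K j)) :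
    ∃ G : ι → Set Z, (∀ i, IsOpen (G i)) ∧ (∀ i, K i ⊆ G i) ∧
      Pairwise fun i j => Disjoint (G i) (G j) := by
  have hsep : ∀ i j, ∃ U V : Set Z, IsOpen U ∧ IsOpen V ∧ K i ⊆ U ∧ K j ⊆ V ∧
      (i ≠ j → Disjoint U V) := by
    intro i j
    rcases eq_or_ne i j with rfl | hij
    · exact ⟨univ, univ, isOpen_univ, isOpen_univ, subset_univ _, subset_univ _,
        (absurd rfl ·)⟩
    · obtain ⟨U, V, hU, hV, hKU, hKV, hUV⟩ :=
        separatedNhds_iff_disjoint.2 (completely_normal (hK hij) (hK hij.symm).symm)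
      exact ⟨U, V, hU, hV, hKU, hKV, fun _ => hUV⟩
  choose U V hU hV hKU hKV hUV using hsep
  refine ⟨fun i => ⋂ j, U i j ∩ V j i, fun i => isOpen_iInter_of_finite fun j =>
    (hU i j).inter (hV j i), fun i => subset_iInter fun j => subset_inter (hKU i j) (hKV j i),
    fun i j hij => (hUV i j hij).mono ?_ ?_⟩
  · exact (iInter_subset _ j).trans inter_subset_left
  · exact (iInter_subset _ i).trans inter_subset_right

section Index

variable {X : Type*} [TopologicalSpace X] {n : ℕ} {φ : X → Fin n}

theorem exists_isOpen_secSet_superset_level [CompletelyNormalSpace (X × X)]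
    (hφ : ∀ r, IsClosed {x | φ x ≤ r})
    (hsec : ∀ i j, ∃ W, IsOpen W ∧ (φ ⁻¹' {i}) ×ˢ (φ ⁻¹' {j}) ⊆ W ∧ SecSet X W) (k : ℕ) :
    ∃ V, IsOpen V ∧ {q : X × X | (φ q.1 : ℕ) + φ q.2 = k} ⊆ V ∧ SecSet X V := by
  choose W hW hKW hWsec using hsec
  let K : {p : Fin n × Fin n // (p.1 : ℕ) + p.2 = k} → Set (X × X) := fun p =>
    (φ ⁻¹' {p.1.1}) ×ˢ (φ ⁻¹' {p.1.2})
  -- `closure (K p) ⊆ {φ ≤ p.1} × {φ ≤ p.2}` meets `K p'` only if `p' ≤ p`, i.e. `p' = p`.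
  have hK : Pairwise fun p p' => Disjoint (closure (K p)) (K p') := by
    intro p p' hne
    have hcl : closure (K p) ⊆ {x | φ x ≤ p.1.1} ×ˢ {x | φ x ≤ p.1.2} :=
      closure_minimal (prod_mono (fun x hx => le_of_eq hx) (fun x hx => le_of_eq hx))
        ((hφ _).prod (hφ _))
    refine disjoint_left.2 fun q hq ⟨hq₁, hq₂⟩ => hne ?_
    obtain ⟨h₁, h₂⟩ := hcl hq
    have hp := p.2
    have hp' := p'.2
    simp only [mem_preimage, mem_singleton_iff, mem_ofPred_eq] at hq₁ hq₂ h₁ h₂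
    rw [hq₁, Fin.le_def] at h₁
    rw [hq₂, Fin.le_def] at h₂
    exact Subtype.ext (Prod.ext (Fin.ext (by omega)) (Fin.ext (by omega)))
  obtain ⟨G, hG, hKG, hGdisj⟩ := exists_isOpen_pairwise_disjoint_superset hK
  have hGW : ∀ p, IsOpen (G p ∩ W p.1.1 p.1.2) := fun p => (hG p).inter (hW _ _)
  refine ⟨⋃ p, G p ∩ W p.1.1 p.1.2, isOpen_iUnion hGW, fun q hq => ?_,
    SecSet.iUnion hGW (fun p p' h => (hGdisj h).mono inter_subset_left inter_subset_left)
      fun p => (hWsec _ _).mono inter_subset_right⟩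
  exact mem_iUnion.2 ⟨⟨(φ q.1, φ q.2), hq⟩, hKG _ ⟨rfl, rfl⟩, hKW _ _ ⟨rfl, rfl⟩⟩

theorem farberTC_le_of_index [CompletelyNormalSpace (X × X)]
    (hφ : ∀ r, IsClosed {x | φ x ≤ r})
    (hsec : ∀ i j, ∃ W, IsOpen W ∧ (φ ⁻¹' {i}) ×ˢ (φ ⁻¹' {j}) ⊆ W ∧ SecSet X W) :
    farberTC X ≤ 2 * n - 1 := by
  choose V hV hLV hVsec using exists_isOpen_secSet_superset_level hφ hsec
  have hlt : ∀ q : X × X, (φ q.1 : ℕ) + φ q.2 < 2 * n - 1 := fun q => by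
    have := (φ q.1).2
    have := (φ q.2).2
    omega
  calc farberTC X ≤ ((2 * n - 1 : ℕ) : ℕ∞) :=
        sInf_le ⟨2 * n - 1, rfl, fun k => V k, fun k => ⟨hV k, hVsec k⟩,
          fun q => ⟨⟨_, hlt q⟩, hLV _ rfl⟩⟩
    _ = 2 * n - 1 := by norm_cast

theorem exists_index_of_partition {Γ : Set (X × X)} {A : Fin n → Set (X × X)}
    (hcover : (⋃ i, A i) = Γ) (hdisj : Pairwise fun i j => Disjoint (A i) (A j))
    (hclosed : ∀ r : Fin n, IsClosed (Subtype.val ⁻¹' (⋃ i, ⋃ (_ : i ≤ r), A i) : Set Γ))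
    {x₀ : X} (hx₀ : ∀ x, (x₀, x) ∈ Γ) :
    ∃ φ : X → Fin n, (∀ x, (x₀, x) ∈ A (φ x)) ∧ ∀ r, IsClosed {x | φ x ≤ r} := by
  have hmem : ∀ x, ∃ i, (x₀, x) ∈ A i := fun x => mem_iUnion.1 (hcover ▸ hx₀ x)
  choose φ hφ using hmem
  have hφeq : ∀ x i, (x₀, x) ∈ A i → φ x = i := fun x i hi =>
    by_contra fun hne => (hdisj hne).ne_of_mem (hφ x) hi rfl
  refine ⟨φ, hφ, fun r => ?_⟩
  convert (hclosed r).preimage (continuous_const.prodMk continuous_id |>.subtype_mk hx₀)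
  ext x
  simp only [mem_ofPred_eq, mem_preimage, mem_iUnion, exists_prop]
  exact ⟨fun h => ⟨φ x, h, hφ x⟩, fun ⟨i, hi, hx⟩ => hφeq x i hx ▸ hi⟩

end Index

/-- If `X` is a regular d-space (and an ENR) with an initial point, then
`TC(X) ≤ 2 ⬝ vTC(X) − 1`. -/
theorem farberTC_le_two_mul_vTC_sub_one {X : Type*} [TopologicalSpace X] (dX : DStruct X)
    (x₀ : X) (hx₀ : IsInitialPoint dX x₀) (hX : IsENR X) (hreg : IsRegularDSpace dX) :
    farberTC X ≤ 2 * vTC dX - 1 := by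
  obtain ⟨n, hvTC, A, hA, hcover, hdisj, hclosed⟩ := hreg
  have := hX.metrizableSpace
  obtain ⟨φ, hφ, hφclosed⟩ := exists_index_of_partition hcover hdisj hclosed hx₀
  choose W hW hAW hWsec using fun i => (hA i).2.secSet.exists_isOpen_superset hX (hA i).1
  rw [hvTC]
  refine farberTC_le_of_index hφclosed fun i j =>
    ⟨_, ((hW i).preimage (by fun_prop)).prod ((hW j).preimage (by fun_prop)), ?_,
      (hWsec i).prod_slice x₀ (hWsec j)⟩
  rintro ⟨x, y⟩ ⟨rfl : φ x = i, rfl : φ y = j⟩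
  exact ⟨hAW _ (hφ x), hAW _ (hφ y)⟩
end

section
/- Let p : E → B and p' : E' → B' be regular d-fibrations (with all spaces ENRs). Then the product d-fibration p × p' : E × E' → B × B' satisfies vTC[p × p' : E × E' → B × B'] ≤ vTC[p : E → B] + vTC[p' : E' → B'] − 1. -/
open unitInterval Set Topology

/-!
Regularity provides partitions `Γ_{E,B} = A₀ ⊔ ⋯ ⊔ A_{n-1}` and `Γ_{E',B'} = A'₀ ⊔ ⋯ ⊔ A'_{m-1}`
into ENRs with sections, whose initial unions `A_{≤r}` are closed. Since `Γ_{E×E',B×B'}` lies in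
`Γ_{E,B} × Γ_{E',B'}`, it is covered by the `n + m - 1` antidiagonal sets
`C_k = ⋃_{i+j=k} A_i × A'_j`. Inside `C_k` the piece `A_i × A'_j` equals
`C_k ∩ (A_{≤i} × A'_{≤j})`, so the finitely many disjoint pieces of `C_k` are closed, hence open,
in `C_k`. The product sections therefore glue to a section over `C_k`, and `C_k`, a finite
topological sum of products of ENRs, is an ENR.
-/

open Function

section Gluing

variable {X Y : Type*} [TopologicalSpace X] [TopologicalSpace Y] {ι : Type*}

theorem exists_mem_preimage_val_iUnion {α : Type*} {P : ι → Set α} (x : ⋃ t, P t) :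
    ∃ t, x ∈ (Subtype.val ⁻¹' P t : Set (⋃ t, P t)) :=
  (mem_iUnion.1 x.2).imp fun _ => id

theorem Pairwise.eq_of_mem_of_mem {α : Type*} {A : ι → Set α} (h : Pairwise (Disjoint on A))
    {i j : ι} {x : α} (hi : x ∈ A i) (hj : x ∈ A j) : i = j :=
  of_not_not fun hij => Set.disjoint_left.1 (h hij) hi hj

theorem isOpen_of_isClosed_of_pairwise_disjoint [Finite ι] {T : ι → Set X}
    (hcov : ∀ x, ∃ t, x ∈ T t) (hdisj : Pairwise (Disjoint on T)) (hcl : ∀ t, IsClosed (T t))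
    (t : ι) : IsOpen (T t) := by
  have hcompl : (T t)ᶜ = ⋃ (s) (_ : s ≠ t), T s := by
    ext x
    simp only [mem_compl_iff, mem_iUnion, exists_prop]
    obtain ⟨s, hs⟩ := hcov x
    exact ⟨fun hxt => ⟨s, fun hst => hxt (hst ▸ hs), hs⟩,
      fun ⟨s, hst, hs⟩ hxt => hst (hdisj.eq_of_mem_of_mem hs hxt)⟩
  rw [← isClosed_compl_iff, hcompl]
  exact isClosed_iUnion_of_finite fun s => isClosed_iUnion_of_finite fun _ => hcl s

theorem exists_continuous_glue {T : ι → Set X} (hopen : ∀ t, IsOpen (T t))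
    (hcov : ∀ x, ∃ t, x ∈ T t) (hdisj : Pairwise (Disjoint on T)) (F : ∀ t, T t → Y)
    (hF : ∀ t, Continuous (F t)) :
    ∃ f : X → Y, Continuous f ∧ ∀ t x (hx : x ∈ T t), f x = F t ⟨x, hx⟩ := by
  have hagree : ∀ i j x (hi : x ∈ T i) (hj : x ∈ T j), F i ⟨x, hi⟩ = F j ⟨x, hj⟩ := by
    intro i j x hi hj
    obtain rfl := hdisj.eq_of_mem_of_mem hi hj
    rfl
  let f := ContinuousMap.liftCover T (fun t => ⟨F t, hF t⟩) hagree fun x =>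
    (hcov x).imp fun t hx => (hopen t).mem_nhds hx
  exact ⟨f, f.continuous, fun t x hx => ContinuousMap.liftCover_coe (⟨x, hx⟩ : T t)⟩

theorem ContinuousMap.continuous_prodMk_of_continuous {Z W : Type*} [TopologicalSpace Z]
    [TopologicalSpace W] [LocallyCompactSpace Y] {f : X → C(Y, Z)} {g : X → C(Y, W)}
    (hf : Continuous f) (hg : Continuous g) : Continuous fun x => (f x).prodMk (g x) :=
  ContinuousMap.continuous_of_continuous_uncurry _ <|
    (ContinuousMap.continuous_uncurry_of_continuous ⟨f, hf⟩).prodMk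
      (ContinuousMap.continuous_uncurry_of_continuous ⟨g, hg⟩)

end Gluing

section ENR

variable {X Y : Type*} [TopologicalSpace X] [TopologicalSpace Y]

theorem IsENR.of_neighbourhoodRetract {V : Type*} [NormedAddCommGroup V] [NormedSpace ℝ V]
    [FiniteDimensional ℝ V] (e : X → V) (he : Continuous e) {U : Set V} (hU : IsOpen U)
    (heU : ∀ x, e x ∈ U) (r : U → X) (hr : Continuous r) (hre : ∀ x, r ⟨e x, heU x⟩ = x) :
    IsENR X := by
  let φ : V ≃L[ℝ] (Fin (Module.finrank ℝ V) → ℝ) :=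
    ContinuousLinearEquiv.ofFinrankEq (Module.finrank_fin_fun ℝ).symm
  let r' : (φ.symm ⁻¹' U : Set _) → X := fun y => r ⟨φ.symm y, y.2⟩
  have hr' : Continuous r' := hr.comp (by fun_prop)
  have hre' : ∀ x (h : φ (e x) ∈ φ.symm ⁻¹' U), r' ⟨φ (e x), h⟩ = x := fun x _ => by
    simp only [r', ContinuousLinearEquiv.symm_apply_apply, hre]
  have hemb :
      IsEmbedding fun x => (⟨φ (e x), by simpa using heU x⟩ : (φ.symm ⁻¹' U : Set _)) :=
    Function.LeftInverse.isEmbedding (fun x => hre' x _) hr' (by fun_prop)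
  exact ⟨_, φ ∘ e, IsEmbedding.subtypeVal.comp hemb, _, hU.preimage φ.symm.continuous,
    by rintro _ ⟨x, rfl⟩; simpa using heU x, r', hr', hre'⟩

theorem IsENR.of_homeomorph (h : X ≃ₜ Y) (hY : IsENR Y) : IsENR X := by
  obtain ⟨N, e, he, U, hU, heU, r, hr, hre⟩ := hY
  exact .of_neighbourhoodRetract (e ∘ h) (he.continuous.comp h.continuous) hU
    (fun x => heU ⟨h x, rfl⟩) (h.symm ∘ r) (by fun_prop) fun x => by simp [hre]

theorem IsENR.prod (hX : IsENR X) (hY : IsENR Y) : IsENR (X × Y) := by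
  obtain ⟨N, e, he, U, hU, heU, r, hr, hre⟩ := hX
  obtain ⟨N', e', he', U', hU', heU', r', hr', hre'⟩ := hY
  exact .of_neighbourhoodRetract (Prod.map e e') (he.continuous.prodMap he'.continuous)
    (hU.prod hU') (fun q => ⟨heU ⟨q.1, rfl⟩, heU' ⟨q.2, rfl⟩⟩)
    (fun y => (r ⟨y.1.1, y.2.1⟩, r' ⟨y.1.2, y.2.2⟩)) (by fun_prop) fun q => by simp [hre, hre']

theorem IsENR.of_isOpen_partition {ι : Type*} [Finite ι] {T : ι → Set X}
    (hopen : ∀ t, IsOpen (T t)) (hcov : ∀ x, ∃ t, x ∈ T t) (hdisj : Pairwise (Disjoint on T))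
    (henr : ∀ t, IsENR (T t)) : IsENR X := by
  classical
  cases nonempty_fintype ι
  choose N e he U hU heU r hr hre using henr
  -- The piece `T t` is placed in the coordinate block `t` and tagged by the vertex
  -- `Pi.single t 1`; balls of radius `1/2` around distinct vertices are disjoint.
  let W : ι → Set ((∀ t, Fin (N t) → ℝ) × (ι → ℝ)) := fun t =>
    {y | y.1 t ∈ U t} ∩ Prod.snd ⁻¹' Metric.ball (Pi.single t 1) (1 / 2)
  have hWopen : ∀ t, IsOpen (W t) := fun t =>
    ((hU t).preimage (by fun_prop)).inter (Metric.isOpen_ball.preimage continuous_snd)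
  have hWdisj : Pairwise (Disjoint on W) := by
    intro s t hst
    refine (Disjoint.preimage Prod.snd (Metric.ball_disjoint_ball ?_)).mono_left
      inter_subset_right |>.mono_right inter_subset_right
    calc (1 / 2 + 1 / 2 : ℝ)
        = dist ((Pi.single s 1 : ι → ℝ) s) ((Pi.single t 1 : ι → ℝ) s) := by
          norm_num [Pi.single_eq_of_ne hst]
      _ ≤ dist (Pi.single s 1 : ι → ℝ) (Pi.single t 1) := dist_le_pi_dist _ _ s
  obtain ⟨f, hf, hfT⟩ := exists_continuous_glue hopen hcov hdisj
    (fun t x => ((Pi.single t (e t x) : ∀ t, Fin (N t) → ℝ), (Pi.single t 1 : ι → ℝ)))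
    fun t => ((continuous_single t).comp (he t).continuous).prodMk continuous_const
  have hfW : ∀ t x (hx : x ∈ T t), f x ∈ W t := fun t x hx => by
    rw [hfT t x hx]
    exact ⟨by simpa using heU t ⟨⟨x, hx⟩, rfl⟩, by simp⟩
  obtain ⟨ρ, hρ, hρW⟩ := exists_continuous_glue
    (T := fun t => (Subtype.val ⁻¹' W t : Set (⋃ t, W t)))
    (fun t => (hWopen t).preimage continuous_subtype_val) exists_mem_preimage_val_iUnion
    (fun s t hst => (hWdisj hst).preimage _) (fun t y => (r t ⟨y.1.1.1 t, y.2.1⟩ : X))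
    fun t => continuous_subtype_val.comp ((hr t).comp (Continuous.subtype_mk (by fun_prop) _))
  refine .of_neighbourhoodRetract f hf (isOpen_iUnion hWopen)
    (fun x => (hcov x).elim fun t hx => mem_iUnion.2 ⟨t, hfW t x hx⟩) ρ hρ fun x => ?_
  obtain ⟨t, hx⟩ := hcov x
  rw [hρW t _ (hfW t x hx)]
  have hfx : (⟨(f x).1 t, (hfW t x hx).1⟩ : U t) = ⟨e t ⟨x, hx⟩, heU t ⟨_, rfl⟩⟩ :=
    Subtype.ext (by simp [hfT t x hx])
  simp only [hfx, hre]

theorem IsENRSet.preimage_val {S P : Set X} (hPS : P ⊆ S) (hP : IsENRSet P) :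
    IsENRSet (Subtype.val ⁻¹' P : Set S) :=
  IsENR.of_homeomorph ((IsEmbedding.subtypeVal.homeomorphImage _).trans
    (Homeomorph.setCongr (by rw [Subtype.image_preimage_coe, inter_eq_right.2 hPS]))) hP

theorem IsENRSet.iUnion {ι : Type*} [Finite ι] {P : ι → Set X} (hdisj : Pairwise (Disjoint on P))
    (hopen : ∀ t, IsOpen (Subtype.val ⁻¹' P t : Set (⋃ t, P t))) (hP : ∀ t, IsENRSet (P t)) :
    IsENRSet (⋃ t, P t) :=
  IsENR.of_isOpen_partition hopen exists_mem_preimage_val_iUnion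
    (fun _ _ h => (hdisj h).preimage _) fun t => (hP t).preimage_val (subset_iUnion P t)

end ENR

section RelProd

variable {X Y : Type*} [TopologicalSpace X] [TopologicalSpace Y]

def relProd (P : Set (X × X)) (P' : Set (Y × Y)) : Set ((X × Y) × (X × Y)) :=
  Homeomorph.prodProdProdComm X Y X Y ⁻¹' (P ×ˢ P')

theorem mem_relProd {P : Set (X × X)} {P' : Set (Y × Y)} {q : (X × Y) × (X × Y)} :
    q ∈ relProd P P' ↔ (q.1.1, q.2.1) ∈ P ∧ (q.1.2, q.2.2) ∈ P' :=
  Iff.rfl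

theorem IsClosed.relProd {F : Set (X × X)} {F' : Set (Y × Y)} (hF : IsClosed F)
    (hF' : IsClosed F') : IsClosed (relProd F F') :=
  (hF.prod hF').preimage (Homeomorph.prodProdProdComm X Y X Y).continuous

theorem IsENRSet.relProd {P : Set (X × X)} {P' : Set (Y × Y)} (hP : IsENRSet P)
    (hP' : IsENRSet P') : IsENRSet (relProd P P') :=
  IsENR.of_homeomorph (((Homeomorph.prodProdProdComm X Y X Y).subtype fun _ => Iff.rfl).trans
    (Homeomorph.Set.prod P P')) (hP.prod hP')

end RelProd

section Parametrized

variable {E B E' B' : Type*} [TopologicalSpace E] [TopologicalSpace B] [TopologicalSpace E']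
  [TopologicalSpace B'] {dE : DStruct E} {p : C(E, B)} {dE' : DStruct E'} {p' : C(E', B')}

theorem DParamSecSet.iUnion {ι : Type*} {P : ι → Set (E × E)} (hdisj : Pairwise (Disjoint on P))
    (hopen : ∀ t, IsOpen (Subtype.val ⁻¹' P t : Set (⋃ t, P t)))
    (hP : ∀ t, DParamSecSet dE p (P t)) : DParamSecSet dE p (⋃ t, P t) := by
  choose s hs hsP using hP
  obtain ⟨g, hg, hgP⟩ := exists_continuous_glue hopen exists_mem_preimage_val_iUnion
    (fun _ _ h => (hdisj h).preimage _) (fun t u => s t ⟨u.1.1, u.2⟩)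
    fun t => (hs t).comp (by fun_prop)
  refine ⟨g, hg, fun u => ?_⟩
  obtain ⟨t, hu⟩ := exists_mem_preimage_val_iUnion u
  rw [hgP t u hu]
  exact hsP t ⟨u.1, hu⟩

theorem GammaEB_prod_subset_relProd :
    GammaEB (dE.prod dE') (p.prodMap p') ⊆ relProd (GammaEB dE p) (GammaEB dE' p') := by
  rintro q ⟨γ, ⟨⟨hγ, hγ'⟩, b, hb⟩, h0, h1⟩
  exact ⟨⟨_, ⟨hγ, b.1, fun t => congrArg Prod.fst (hb t)⟩, congrArg Prod.fst h0,
      congrArg Prod.fst h1⟩,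
    ⟨_, ⟨hγ', b.2, fun t => congrArg Prod.snd (hb t)⟩, congrArg Prod.snd h0,
      congrArg Prod.snd h1⟩⟩

theorem DParamSecSet.relProd {P : Set (E × E)} {P' : Set (E' × E')} (hP : DParamSecSet dE p P)
    (hP' : DParamSecSet dE' p' P') :
    DParamSecSet (dE.prod dE') (p.prodMap p') (relProd P P') := by
  obtain ⟨s, hs, hsP⟩ := hP
  obtain ⟨s', hs', hsP'⟩ := hP'
  refine ⟨fun u => (s ⟨_, u.2.1⟩).prodMk (s' ⟨_, u.2.2⟩),
    ContinuousMap.continuous_prodMk_of_continuous (hs.comp (by fun_prop))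
      (hs'.comp (by fun_prop)), fun u => ?_⟩
  obtain ⟨⟨hd, b, hb⟩, h0, h1⟩ := hsP ⟨_, u.2.1⟩
  obtain ⟨⟨hd', b', hb'⟩, h0', h1'⟩ := hsP' ⟨_, u.2.2⟩
  exact ⟨⟨⟨hd, hd'⟩, (b, b'), fun t => Prod.ext (hb t) (hb' t)⟩, Prod.ext h0 h0',
    Prod.ext h1 h1'⟩

end Parametrized

section RegularPartition

variable {Z : Type*} [TopologicalSpace Z] {n : ℕ}

structure IsRegularPartition (S : Set Z) (A : Fin n → Set Z) : Prop where
  iUnion_eq : ⋃ i, A i = S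
  pairwise_disjoint : Pairwise (Disjoint on A)
  isClosed_iUnion_le : ∀ r, IsClosed (Subtype.val ⁻¹' (⋃ i, ⋃ (_ : i ≤ r), A i) : Set S)

theorem IsRegularPartition.exists_isClosed_mem_iff_le {S : Set Z} {A : Fin n → Set Z}
    (hA : IsRegularPartition S A) :
    ∃ F : Fin n → Set Z, (∀ r, IsClosed (F r)) ∧ ∀ i r x, x ∈ A i → (x ∈ F r ↔ i ≤ r) := by
  choose F hF hFA using fun r => isClosed_induced_iff.1 (hA.isClosed_iUnion_le r)
  refine ⟨F, hF, fun i r x hx => ?_⟩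
  have hxS : x ∈ S := hA.iUnion_eq ▸ mem_iUnion_of_mem i hx
  have hFx := congrArg (⟨x, hxS⟩ ∈ ·) (hFA r)
  simp only [mem_preimage, mem_iUnion, exists_prop, eq_iff_iff] at hFx
  rw [hFx]
  exact ⟨fun ⟨i', hi', hx'⟩ => hA.pairwise_disjoint.eq_of_mem_of_mem hx hx' ▸ hi',
    fun h => ⟨i, h, hx⟩⟩

variable {X Y : Type*} [TopologicalSpace X] [TopologicalSpace Y] {m : ℕ}

def relProdAntidiagonal (A : Fin n → Set (X × X)) (A' : Fin m → Set (Y × Y)) (k : ℕ) :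
    {ij : Fin n × Fin m // (ij.1 : ℕ) + ij.2 = k} → Set ((X × Y) × (X × Y)) :=
  fun ij => relProd (A ij.1.1) (A' ij.1.2)

theorem relProd_iUnion_subset_iUnion_relProdAntidiagonal (A : Fin n → Set (X × X))
    (A' : Fin m → Set (Y × Y)) :
    relProd (⋃ i, A i) (⋃ j, A' j) ⊆
      ⋃ k : Fin (n + m - 1), ⋃ ij, relProdAntidiagonal A A' k ij := by
  rintro q ⟨hq, hq'⟩
  obtain ⟨i, hi⟩ := mem_iUnion.1 hq
  obtain ⟨j, hj⟩ := mem_iUnion.1 hq'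
  exact mem_iUnion.2 ⟨⟨i + j, by omega⟩, mem_iUnion.2 ⟨⟨(i, j), rfl⟩, hi, hj⟩⟩

theorem pairwise_disjoint_relProdAntidiagonal {A : Fin n → Set (X × X)}
    {A' : Fin m → Set (Y × Y)} (hA : Pairwise (Disjoint on A)) (hA' : Pairwise (Disjoint on A'))
    (k : ℕ) : Pairwise (Disjoint on relProdAntidiagonal A A' k) := by
  refine fun ij ij' hne => Set.disjoint_left.2 fun q hq hq' => hne ?_
  exact Subtype.ext (Prod.ext (hA.eq_of_mem_of_mem hq.1 hq'.1) (hA'.eq_of_mem_of_mem hq.2 hq'.2))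

variable {S : Set (X × X)} {S' : Set (Y × Y)} {A : Fin n → Set (X × X)}
  {A' : Fin m → Set (Y × Y)}

theorem isClosed_relProdAntidiagonal (hA : IsRegularPartition S A)
    (hA' : IsRegularPartition S' A') (k : ℕ) (ij) :
    IsClosed (Subtype.val ⁻¹' relProdAntidiagonal A A' k ij :
      Set (⋃ ij, relProdAntidiagonal A A' k ij)) := by
  obtain ⟨F, hF, hFA⟩ := hA.exists_isClosed_mem_iff_le
  obtain ⟨F', hF', hFA'⟩ := hA'.exists_isClosed_mem_iff_le
  obtain ⟨⟨i, j⟩, hk⟩ := ij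
  suffices h : (Subtype.val ⁻¹' relProdAntidiagonal A A' k ⟨(i, j), hk⟩ :
      Set (⋃ ij, relProdAntidiagonal A A' k ij)) = Subtype.val ⁻¹' relProd (F i) (F' j) by
    rw [h]
    exact ((hF i).relProd (hF' j)).preimage continuous_subtype_val
  ext ⟨q, hq⟩
  obtain ⟨⟨⟨i₁, j₁⟩, hk₁⟩, hq₁⟩ := mem_iUnion.1 hq
  obtain ⟨hq₁, hq₁'⟩ := mem_relProd.1 hq₁
  dsimp only at hk hk₁ hq₁ hq₁'
  change (q.1.1, q.2.1) ∈ A i ∧ (q.1.2, q.2.2) ∈ A' j ↔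
    (q.1.1, q.2.1) ∈ F i ∧ (q.1.2, q.2.2) ∈ F' j
  rw [hFA i₁ i _ hq₁, hFA' j₁ j _ hq₁']
  constructor
  · rintro ⟨hi, hj⟩
    obtain rfl := hA.pairwise_disjoint.eq_of_mem_of_mem hq₁ hi
    obtain rfl := hA'.pairwise_disjoint.eq_of_mem_of_mem hq₁' hj
    exact ⟨le_rfl, le_rfl⟩
  · rintro ⟨hi, hj⟩
    obtain rfl : i₁ = i := Fin.ext (by simp only [Fin.le_iff_val_le_val] at hi hj; omega)
    obtain rfl : j₁ = j := Fin.ext (by simp only [Fin.le_iff_val_le_val] at hi hj; omega)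
    exact ⟨hq₁, hq₁'⟩

theorem isOpen_relProdAntidiagonal (hA : IsRegularPartition S A)
    (hA' : IsRegularPartition S' A') (k : ℕ) (ij) :
    IsOpen (Subtype.val ⁻¹' relProdAntidiagonal A A' k ij :
      Set (⋃ ij, relProdAntidiagonal A A' k ij)) :=
  isOpen_of_isClosed_of_pairwise_disjoint exists_mem_preimage_val_iUnion
    (fun _ _ h => (pairwise_disjoint_relProdAntidiagonal hA.pairwise_disjoint
      hA'.pairwise_disjoint k h).preimage _) (isClosed_relProdAntidiagonal hA hA' k) ij

end RegularPartition

theorem vTCp_prod_le_general {E B E' B' : Type*} [TopologicalSpace E] [TopologicalSpace B]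
    [TopologicalSpace E'] [TopologicalSpace B']
    (dE : DStruct E) (dE' : DStruct E')
    (p : C(E, B)) (p' : C(E', B'))
    (hreg : IsRegularDFib dE p) (hreg' : IsRegularDFib dE' p') :
    vTCp (dE.prod dE') (p.prodMap p') ≤ vTCp dE p + vTCp dE' p' - 1 := by
  obtain ⟨n, hn, A, hA, hAΓ, hAdisj, hAcl⟩ := hreg
  obtain ⟨m, hm, A', hA', hAΓ', hAdisj', hAcl'⟩ := hreg'
  have hpart : IsRegularPartition (GammaEB dE p) A := ⟨hAΓ, hAdisj, hAcl⟩
  have hpart' : IsRegularPartition (GammaEB dE' p') A' := ⟨hAΓ', hAdisj', hAcl'⟩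
  have hcov : GammaEB (dE.prod dE') (p.prodMap p') ⊆
      ⋃ k : Fin (n + m - 1), ⋃ ij, relProdAntidiagonal A A' k ij := by
    calc GammaEB (dE.prod dE') (p.prodMap p')
        ⊆ relProd (GammaEB dE p) (GammaEB dE' p') := GammaEB_prod_subset_relProd
      _ = relProd (⋃ i, A i) (⋃ j, A' j) := by rw [hAΓ, hAΓ']
      _ ⊆ _ := relProd_iUnion_subset_iUnion_relProdAntidiagonal A A'
  have hdisj k := pairwise_disjoint_relProdAntidiagonal hAdisj hAdisj' k
  have hopen k := isOpen_relProdAntidiagonal hpart hpart' k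
  calc vTCp (dE.prod dE') (p.prodMap p') ≤ ((n + m - 1 : ℕ) : ℕ∞) :=
        sInf_le ⟨_, rfl, _, fun k =>
          ⟨.iUnion (hdisj k) (hopen k) fun ij => (hA ij.1.1).1.relProd (hA' ij.1.2).1,
            .iUnion (hdisj k) (hopen k) fun ij => (hA ij.1.1).2.relProd (hA' ij.1.2).2⟩, hcov⟩
    _ = vTCp dE p + vTCp dE' p' - 1 := by rw [hn, hm]; norm_cast

/-- For regular d-fibrations `p : E → B` and `p' : E' → B'` (all spaces
ENRs), the product d-fibration satisfies
`vTC[p × p'] ≤ vTC[p] + vTC[p'] − 1`. -/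
theorem vTCp_prod_le {E B E' B' : Type*} [TopologicalSpace E] [TopologicalSpace B]
    [TopologicalSpace E'] [TopologicalSpace B']
    (dE : DStruct E) (dB : DStruct B) (dE' : DStruct E') (dB' : DStruct B')
    (p : C(E, B)) (p' : C(E', B'))
    (hE : IsENR E) (hB : IsENR B) (hE' : IsENR E') (hB' : IsENR B')
    (hp : IsDFibration dE dB p) (hp' : IsDFibration dE' dB' p')
    (hreg : IsRegularDFib dE p) (hreg' : IsRegularDFib dE' p') :
    vTCp (dE.prod dE') (p.prodMap p') ≤ vTCp dE p + vTCp dE' p' - 1 :=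
  vTCp_prod_le_general dE dE' p p' hreg hreg'
end

section
/- For the Hopf fibration p : S^{2n+1} → ℂP^n (a principal S¹-bundle), with S^{2n+1} equipped with the d-structure associated to any d-structure on ℂP^n (e.g. the standard one induced from the directed sphere structure on S² when n = 1), the directed parametrized topological complexity equals 2: vTC[p : S^{2n+1} → ℂP^n] = 2. In particular vTC[p : S³ → S²] = 2. -/
open unitInterval Set Topology

noncomputable section

/-- The equivalence relation on the unit sphere of `ℂ^{n+1}` identifying unit vectors
spanning the same complex line. -/
def hopfSetoid (n : ℕ) : Setoid ↥(Metric.sphere (0 : EuclideanSpace ℂ (Fin (n + 1))) 1) where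
  r z w := ∃ c : ℂ, ‖c‖ = 1 ∧
    c • (z : EuclideanSpace ℂ (Fin (n + 1))) = (w : EuclideanSpace ℂ (Fin (n + 1)))
  iseqv := by
    constructor
    · exact fun z => ⟨1, by simp, by simp⟩
    · rintro z w ⟨c, hc, hcw⟩
      have hc0 : c ≠ 0 := by intro hc0; rw [hc0] at hc; simp at hc
      exact ⟨c⁻¹, by rw [norm_inv, hc]; norm_num,
        by rw [← hcw, smul_smul, inv_mul_cancel₀ hc0, one_smul]⟩
    · rintro z w v ⟨c, hc, hcw⟩ ⟨d, hd, hdv⟩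
      exact ⟨d * c, by rw [norm_mul, hc, hd]; norm_num, by rw [mul_smul, hcw, hdv]⟩

/-- The complex projective space `ℂP^n` as the quotient of the unit sphere `S^{2n+1}` of
`ℂ^{n+1}` by the span relation. -/
def CPSpace (n : ℕ) : Type := Quotient (hopfSetoid n)

instance (n : ℕ) : TopologicalSpace (CPSpace n) :=
  inferInstanceAs (TopologicalSpace (Quotient (hopfSetoid n)))

/-- The Hopf fibration `S^{2n+1} → ℂP^n`, sending a unit vector to the complex line it
spans. -/
def hopfMap (n : ℕ) : C(↥(Metric.sphere (0 : EuclideanSpace ℂ (Fin (n + 1))) 1), CPSpace n) :=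
  ⟨Quotient.mk (hopfSetoid n), continuous_quotient_mk'⟩

/-!
A path in a fibre of `p` is a d-path for the associated d-structure, since its projection is
constant; so only fibrewise paths matter. The fibres of the Hopf map are circles: `z, w` lie
in the same fibre iff `w = c • z` with `c = ⟪z, w⟫` of modulus one. On each of the two sets
`{c ≠ -1}` and `{c ≠ 1}` a continuous argument `θ` of `c` gives the section
`t ↦ exp (iθt) • z`, and these sets are ENRs, being retracts of open subsets of
`ℂ^{n+1} × ℂ^{n+1}`. A single section over all of `E ×_B E`, restricted to the pairs
`(z, exp (2πiθ) • z)`, would be a free null-homotopy of the degree-one loop in the circle,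
which lifting to the covering `ℝ → S¹` rules out.
-/

open scoped InnerProductSpace

lemma Complex.exp_arg_mul_I_of_norm_eq_one {x : ℂ} (hx : ‖x‖ = 1) :
    Complex.exp (Complex.arg x * Complex.I) = x := by
  simpa [hx] using Complex.norm_mul_exp_arg_mul_I x

lemma Complex.mem_slitPlane_of_norm_eq_one {x : ℂ} (hx : ‖x‖ = 1) (h : x ≠ -1) :
    x ∈ Complex.slitPlane := by
  refine Complex.mem_slitPlane_iff_arg.2 ⟨fun hπ ↦ h ?_, by rintro rfl; simp at hx⟩
  rw [← Complex.exp_arg_mul_I_of_norm_eq_one hx, hπ, Complex.exp_pi_mul_I]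

/-- An argument function on the unit circle that is continuous away from `ω`. -/
def Complex.argCut (ω c : ℂ) : ℝ := Complex.arg (-ω) + Complex.arg (c / -ω)

lemma Complex.exp_argCut_mul_I {ω c : ℂ} (hω : ‖ω‖ = 1) (hc : ‖c‖ = 1) :
    Complex.exp (Complex.argCut ω c * Complex.I) = c := by
  have hω0 : -ω ≠ 0 := by rw [neg_ne_zero]; rintro rfl; simp at hω
  rw [Complex.argCut, Complex.ofReal_add, add_mul, Complex.exp_add,
    Complex.exp_arg_mul_I_of_norm_eq_one (by rwa [norm_neg]),
    Complex.exp_arg_mul_I_of_norm_eq_one (by rw [norm_div, norm_neg, hω, hc, div_one]),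
    mul_div_cancel₀ _ hω0]

lemma Complex.div_neg_mem_slitPlane {ω c : ℂ} (hω : ‖ω‖ = 1) (hc : ‖c‖ = 1) (hne : c ≠ ω) :
    c / -ω ∈ Complex.slitPlane := by
  have hω0 : -ω ≠ 0 := by rw [neg_ne_zero]; rintro rfl; simp at hω
  refine Complex.mem_slitPlane_of_norm_eq_one (by simp [hω, hc]) fun h ↦ hne ?_
  rw [div_eq_iff hω0] at h
  simpa using h

lemma Complex.continuousAt_argCut {ω c : ℂ} (h : c / -ω ∈ Complex.slitPlane) :
    ContinuousAt (Complex.argCut ω) c :=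
  continuousAt_const.add
    ((Complex.continuousAt_arg h).comp (f := (· / -ω)) (continuousAt_id.div_const _))

theorem Circle.not_exists_loopHomotopy_one_exp :
    ¬ ∃ H : C(I × I, Circle), (∀ θ, H (0, θ) = 1) ∧
      (∀ θ : I, H (1, θ) = Circle.exp (2 * Real.pi * θ)) ∧ ∀ t, H (t, 0) = H (t, 1) := by
  rintro ⟨H, h0, h1, hper⟩
  let L := Circle.isCoveringMap_exp.liftHomotopy H (.const I 0) (by simp [h0])
  have hL (x) : Circle.exp (L x) = H x :=
    congr_fun (Circle.isCoveringMap_exp.liftHomotopy_lifts ..) x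
  have hL0 (θ) : L (0, θ) = 0 := Circle.isCoveringMap_exp.liftHomotopy_zero ..
  -- `θ ↦ L (1, θ)` and `θ ↦ L (1, 0) + 2πθ` both lift `θ ↦ exp (2πiθ)`
  have hend : L (1, 1) = L (1, 0) + 2 * Real.pi := by
    have := Circle.isCoveringMap_exp.eq_of_comp_eq (g₁ := fun θ : I ↦ L (1, θ))
      (g₂ := fun θ : I ↦ L (1, 0) + 2 * Real.pi * θ) (by fun_prop) (by fun_prop)
      (funext fun θ ↦ by simp [Circle.exp_add, hL, h1]) 0 (by simp)
    simpa using congr_fun this 1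
  -- `t ↦ L (t, 0)` and `t ↦ L (t, 1)` both lift `t ↦ H (t, 0) = H (t, 1)`
  have hside : L (1, 1) = L (1, 0) := by
    have := Circle.isCoveringMap_exp.eq_of_comp_eq (g₁ := fun t : I ↦ L (t, 1))
      (g₂ := fun t : I ↦ L (t, 0)) (by fun_prop) (by fun_prop)
      (funext fun t ↦ by simp [hL, hper]) 0 (by simp [hL0])
    exact congr_fun this 1
  linarith [Real.pi_pos]

lemma isENR_of_retract {A F : Type*} [TopologicalSpace A] [NormedAddCommGroup F]
    [NormedSpace ℝ F] [FiniteDimensional ℝ F] {e : A → F} (he : IsEmbedding e) {V : Set F}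
    (hV : IsOpen V) (heV : ∀ a, e a ∈ V) (r : V → A) (hr : Continuous r)
    (hre : ∀ a, r ⟨e a, heV a⟩ = a) : IsENR A := by
  let φ : F ≃L[ℝ] (Fin (Module.finrank ℝ F) → ℝ) :=
    ContinuousLinearEquiv.ofFinrankEq (Module.finrank_fin_fun ℝ).symm
  refine ⟨_, φ ∘ e, φ.toHomeomorph.isEmbedding.comp he, φ.symm ⁻¹' V,
    hV.preimage φ.symm.continuous, range_subset_iff.2 fun a ↦ by simpa using heV a,
    fun y ↦ r ⟨φ.symm y, y.2⟩, hr.comp (by fun_prop), fun a _ ↦ ?_⟩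
  simpa using hre a

def unitVector {F : Type*} [NormedAddCommGroup F] [NormedSpace ℂ F] (x : F) : F :=
  (‖x‖⁻¹ : ℂ) • x

section unitVector

variable {F α : Type*} [NormedAddCommGroup F] [NormedSpace ℂ F]

lemma norm_unitVector {x : F} (hx : x ≠ 0) : ‖unitVector x‖ = 1 :=
  norm_smul_inv_norm hx

lemma unitVector_of_norm_eq_one {x : F} (hx : ‖x‖ = 1) : unitVector x = x := by
  simp [unitVector, hx]

lemma Continuous.unitVector [TopologicalSpace α] {f : α → F} (hf : Continuous f)
    (h0 : ∀ a, f a ≠ 0) : Continuous fun a ↦ unitVector (f a) :=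
  ((Complex.continuous_ofReal.comp hf.norm).inv₀ fun a ↦ by simpa using h0 a).smul hf

end unitVector

lemma unitVector_ne_of_div_neg_mem_slitPlane {c ω : ℂ} (h : c / -ω ∈ Complex.slitPlane) :
    unitVector c ≠ ω := by
  rintro rfl
  have hc : c ≠ 0 := by rintro rfl; simp [Complex.zero_notMem_slitPlane] at h
  have hc' : (‖c‖ : ℂ) ≠ 0 := by simpa using hc
  have : c / -unitVector c = -(‖c‖ : ℂ) := by
    rw [unitVector, smul_eq_mul]; field_simp
  rw [this, Complex.neg_ofReal_mem_slitPlane] at h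
  exact (norm_nonneg c).not_gt h

lemma inner_smul_right_self {𝕜 F : Type*} [RCLike 𝕜] [NormedAddCommGroup F]
    [InnerProductSpace 𝕜 F] {x : F} (hx : ‖x‖ = 1) (c : 𝕜) : ⟪x, c • x⟫_𝕜 = c := by
  rw [inner_smul_right, inner_self_eq_one_of_norm_eq_one hx, mul_one]

section Parametrized

variable {E B : Type*} [TopologicalSpace E] [TopologicalSpace B]

lemma vTCp_le_of_cover {dE : DStruct E} {p : C(E, B)} {m : ℕ} (U : Fin m → Set (E × E))
    (hU : ∀ i, IsENRSet (U i) ∧ DParamSecSet dE p (U i)) (hcov : GammaEB dE p ⊆ ⋃ i, U i) :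
    vTCp dE p ≤ m :=
  sInf_le ⟨m, rfl, U, hU, hcov⟩

lemma two_le_vTCp {dE : DStruct E} {p : C(E, B)} (hne : (GammaEB dE p).Nonempty)
    (hsec : ∀ U, DParamSecSet dE p U → ¬ GammaEB dE p ⊆ U) : 2 ≤ vTCp dE p := by
  refine le_sInf ?_
  rintro _ ⟨m, rfl, U, hU, hcov⟩
  match m with
  | 0 =>
    obtain ⟨i, -⟩ := mem_iUnion.1 (hcov hne.some_mem)
    exact i.elim0
  | 1 =>
    refine (hsec (U 0) (hU 0).2 fun q hq ↦ ?_).elim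
    obtain ⟨i, hi⟩ := mem_iUnion.1 (hcov hq)
    rwa [Subsingleton.elim i 0] at hi
  | m + 2 => exact_mod_cast (by omega : 2 ≤ m + 2)

lemma GammaEB_subset_EBE (dE : DStruct E) (p : C(E, B)) : GammaEB dE p ⊆ EBE p := by
  rintro q ⟨γ, ⟨-, b, hb⟩, h0, h1⟩
  show p q.1 = p q.2
  rw [← h0, ← h1, hb, hb]

lemma DParamSecSet.subset_GammaEB {dE : DStruct E} {p : C(E, B)} {U : Set (E × E)}
    (h : DParamSecSet dE p U) : U ⊆ GammaEB dE p := by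
  obtain ⟨s, -, hs⟩ := h
  exact fun q hq ↦ ⟨s ⟨q, hq⟩, hs ⟨q, hq⟩⟩

lemma ParamSecSet.mono {p : C(E, B)} {U V : Set (E × E)} (h : ParamSecSet p U) (hVU : V ⊆ U) :
    ParamSecSet p V := by
  obtain ⟨s, hs, hsec⟩ := h
  exact ⟨fun v ↦ s (inclusion hVU v), hs.comp (continuous_inclusion hVU), fun v ↦ hsec _⟩

lemma mem_dEB_assocDStruct {dB : DStruct B} {p : C(E, B)} {γ : C(I, E)} :
    γ ∈ dEB (assocDStruct dB p) p ↔ ∃ b, ∀ t, p (γ t) = b := by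
  refine ⟨And.right, fun ⟨b, hb⟩ ↦ ⟨?_, b, hb⟩⟩
  show p.comp γ ∈ dB.paths
  convert dB.const_mem b
  ext t
  exact hb t

lemma dParamSecSet_assocDStruct_iff {dB : DStruct B} {p : C(E, B)} {U : Set (E × E)} :
    DParamSecSet (assocDStruct dB p) p U ↔ ParamSecSet p U := by
  simp only [DParamSecSet, ParamSecSet, mem_dEB_assocDStruct]

end Parametrized

namespace Hopf

variable {n : ℕ}

abbrev Sphere (n : ℕ) : Type := ↥(Metric.sphere (0 : EuclideanSpace ℂ (Fin (n + 1))) 1)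

/-- The complex number `c` with `c • z = w` when `z, w` lie in the same fibre. -/
def phase (z w : Sphere n) : ℂ := ⟪z.1, w.1⟫_ℂ

lemma continuous_phase : Continuous fun q : Sphere n × Sphere n ↦ phase q.1 q.2 := by
  unfold phase; fun_prop

lemma hopfMap_eq_iff {z w : Sphere n} :
    hopfMap n z = hopfMap n w ↔ ∃ c : ℂ, ‖c‖ = 1 ∧ c • z.1 = w.1 :=
  Quotient.eq

lemma hopfMap_eq_iff_phase {z w : Sphere n} :
    hopfMap n z = hopfMap n w ↔ ‖phase z w‖ = 1 ∧ phase z w • z.1 = w.1 := by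
  refine hopfMap_eq_iff.trans ⟨fun ⟨c, hc, hcw⟩ ↦ ?_, fun h ↦ ⟨_, h⟩⟩
  rw [phase, ← hcw, inner_smul_right_self (norm_eq_of_mem_sphere z)]
  exact ⟨hc, rfl⟩

def rotation : C((Sphere n × ℝ) × I, Sphere n) where
  toFun q := ⟨Complex.exp ((q.1.2 * q.2 : ℝ) * Complex.I) • q.1.1.1, by
    rw [mem_sphere_zero_iff_norm, norm_smul, Complex.norm_exp_ofReal_mul_I,
      norm_eq_of_mem_sphere, one_mul]⟩
  continuous_toFun := by fun_prop

lemma hopfMap_rotation (z : Sphere n) (θ : ℝ) (t : I) :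
    hopfMap n (rotation ((z, θ), t)) = hopfMap n z :=
  (hopfMap_eq_iff.2 ⟨_, Complex.norm_exp_ofReal_mul_I _, rfl⟩).symm

def phaseNe (n : ℕ) (ω : ℂ) : Set (Sphere n × Sphere n) :=
  {q | q ∈ EBE (hopfMap n) ∧ phase q.1 q.2 ≠ ω}

lemma EBE_subset_phaseNe_union {ω ω' : ℂ} (h : ω ≠ ω') :
    EBE (hopfMap n) ⊆ phaseNe n ω ∪ phaseNe n ω' := by
  intro q hq
  by_cases hω : phase q.1 q.2 = ω
  · exact Or.inr ⟨hq, hω ▸ h⟩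
  · exact Or.inl ⟨hq, hω⟩

lemma paramSecSet_phaseNe {ω : ℂ} (hω : ‖ω‖ = 1) : ParamSecSet (hopfMap n) (phaseNe n ω) := by
  have hphase (q : phaseNe n ω) := hopfMap_eq_iff_phase.1 q.2.1
  refine ⟨fun q ↦ ContinuousMap.curry rotation
    (q.1.1, Complex.argCut ω (phase q.1.1 q.1.2)), ?_, fun q ↦ ⟨?_, ?_, ?_⟩⟩
  · refine (ContinuousMap.curry rotation).continuous.comp
      ((continuous_fst.comp continuous_subtype_val).prodMk ?_)
    refine continuous_iff_continuousAt.2 fun q ↦ ?_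
    exact (Complex.continuousAt_argCut (Complex.div_neg_mem_slitPlane hω (hphase q).1 q.2.2)).comp
      (f := fun q : phaseNe n ω ↦ phase q.1.1 q.1.2)
      (continuous_phase.comp continuous_subtype_val).continuousAt
  · exact ⟨_, hopfMap_rotation _ _⟩
  · ext1; simp [rotation]
  · ext1; simp [rotation, Complex.exp_argCut_mul_I hω (hphase q).1, (hphase q).2]

/-- The pairs `(v, w)` with `⟪v, w⟫` off the closed ray through `ω`: an open neighbourhood of
`phaseNe n ω` that retracts onto it. -/
def phaseNeNhd (n : ℕ) (ω : ℂ) :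
    Set (EuclideanSpace ℂ (Fin (n + 1)) × EuclideanSpace ℂ (Fin (n + 1))) :=
  {v | ⟪v.1, v.2⟫_ℂ / -ω ∈ Complex.slitPlane}

lemma isOpen_phaseNeNhd (ω : ℂ) : IsOpen (phaseNeNhd n ω) :=
  Complex.isOpen_slitPlane.preimage (by fun_prop)

lemma inner_ne_zero_of_mem_phaseNeNhd {ω : ℂ} {v} (hv : v ∈ phaseNeNhd n ω) :
    ⟪v.1, v.2⟫_ℂ ≠ 0 := by
  rintro h
  simp [phaseNeNhd, h, Complex.zero_notMem_slitPlane] at hv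

lemma ne_zero_of_mem_phaseNeNhd {ω : ℂ} {v} (hv : v ∈ phaseNeNhd n ω) : v.1 ≠ 0 := by
  rintro h
  exact inner_ne_zero_of_mem_phaseNeNhd hv (by simp [h])

def phaseNeRetraction {ω : ℂ} (v : phaseNeNhd n ω) : phaseNe n ω :=
  ⟨(⟨unitVector v.1.1, by simpa using norm_unitVector (ne_zero_of_mem_phaseNeNhd v.2)⟩,
    ⟨unitVector ⟪v.1.1, v.1.2⟫_ℂ • unitVector v.1.1, by
      simp [norm_smul, norm_unitVector (inner_ne_zero_of_mem_phaseNeNhd v.2),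
        norm_unitVector (ne_zero_of_mem_phaseNeNhd v.2)]⟩),
    hopfMap_eq_iff.2 ⟨_, norm_unitVector (inner_ne_zero_of_mem_phaseNeNhd v.2), rfl⟩, by
      rw [phase, inner_smul_right_self (norm_unitVector (ne_zero_of_mem_phaseNeNhd v.2))]
      exact unitVector_ne_of_div_neg_mem_slitPlane v.2⟩

lemma continuous_phaseNeRetraction {ω : ℂ} :
    Continuous (phaseNeRetraction (n := n) (ω := ω)) := by
  have h1 := (continuous_fst.comp continuous_subtype_val).unitVector
    fun v : phaseNeNhd n ω ↦ ne_zero_of_mem_phaseNeNhd v.2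
  have h2 := (continuous_inner.comp continuous_subtype_val).unitVector
    fun v : phaseNeNhd n ω ↦ inner_ne_zero_of_mem_phaseNeNhd v.2
  exact (h1.subtype_mk _ |>.prodMk ((h2.smul h1).subtype_mk _)).subtype_mk _

lemma phaseNeRetraction_apply_coe {ω : ℂ} (q : phaseNe n ω)
    (hq : (q.1.1.1, q.1.2.1) ∈ phaseNeNhd n ω) :
    phaseNeRetraction ⟨(q.1.1.1, q.1.2.1), hq⟩ = q := by
  obtain ⟨hnorm, hsmul⟩ := hopfMap_eq_iff_phase.1 q.2.1
  simp only [phase] at hnorm hsmul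
  ext1; ext1
  · ext1; simp [phaseNeRetraction, unitVector_of_norm_eq_one, norm_eq_of_mem_sphere]
  · ext1; simpa [phaseNeRetraction, unitVector_of_norm_eq_one, norm_eq_of_mem_sphere, hnorm]
      using hsmul

lemma isENRSet_phaseNe {ω : ℂ} (hω : ‖ω‖ = 1) : IsENRSet (phaseNe n ω) :=
  isENR_of_retract ((IsEmbedding.subtypeVal.prodMap IsEmbedding.subtypeVal).comp
    IsEmbedding.subtypeVal) (isOpen_phaseNeNhd ω)
    (fun q ↦ Complex.div_neg_mem_slitPlane hω (hopfMap_eq_iff_phase.1 q.2.1).1 q.2.2)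
    phaseNeRetraction continuous_phaseNeRetraction (phaseNeRetraction_apply_coe · _)

instance : Nonempty (Sphere n) := ⟨⟨EuclideanSpace.single 0 1, by simp⟩⟩

lemma GammaEB_assocDStruct (dB : DStruct (CPSpace n)) :
    GammaEB (assocDStruct dB (hopfMap n)) (hopfMap n) = EBE (hopfMap n) := by
  refine (GammaEB_subset_EBE _ _).antisymm fun q hq ↦ ?_
  rcases EBE_subset_phaseNe_union (by norm_num : (-1 : ℂ) ≠ 1) hq with h | h
  all_goals
    exact (dParamSecSet_assocDStruct_iff.2 (paramSecSet_phaseNe (by simp))).subset_GammaEB h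

def fibreLoop (z : Sphere n) : C(I, EBE (hopfMap n)) where
  toFun θ := ⟨(z, ⟨(Circle.exp (2 * Real.pi * θ) : ℂ) • z.1, by
      rw [mem_sphere_zero_iff_norm, norm_smul, Circle.norm_coe, norm_eq_of_mem_sphere, one_mul]⟩),
    hopfMap_eq_iff.2 ⟨_, Circle.norm_coe _, rfl⟩⟩
  continuous_toFun := by fun_prop

lemma fibreLoop_zero (z : Sphere n) : fibreLoop z 0 = fibreLoop z 1 := by
  ext1; simp [fibreLoop]

lemma not_paramSecSet_EBE : ¬ ParamSecSet (hopfMap n) (EBE (hopfMap n)) := by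
  rintro ⟨s, hs, hsec⟩
  obtain ⟨z⟩ : Nonempty (Sphere n) := inferInstance
  have hpath : Continuous fun x : I × I ↦ s (fibreLoop z x.2) x.1 := by fun_prop
  have hfib (x : I × I) : hopfMap n z = hopfMap n (s (fibreLoop z x.2) x.1) := by
    obtain ⟨⟨b, hb⟩, h0, -⟩ := hsec (fibreLoop z x.2)
    rw [hb, ← hb 0, h0]
    rfl
  let H : C(I × I, Circle) :=
    ⟨fun x ↦ ⟨phase z (s (fibreLoop z x.2) x.1),
        mem_sphere_zero_iff_norm.2 (hopfMap_eq_iff_phase.1 (hfib x)).1⟩,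
      (continuous_phase.comp (continuous_const.prodMk hpath)).subtype_mk _⟩
  refine Circle.not_exists_loopHomotopy_one_exp ⟨H, fun θ ↦ ?_, fun θ ↦ ?_, fun t ↦ ?_⟩
  · ext1
    show phase z (s (fibreLoop z θ) 0) = 1
    rw [(hsec _).2.1]
    exact inner_self_eq_one_of_norm_eq_one (norm_eq_of_mem_sphere z)
  · ext1
    show phase z (s (fibreLoop z θ) 1) = _
    rw [(hsec _).2.2]
    exact inner_smul_right_self (norm_eq_of_mem_sphere z) _
  · ext1
    show phase z (s (fibreLoop z 0) t) = phase z (s (fibreLoop z 1) t)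
    rw [fibreLoop_zero]

end Hopf

/-- For the Hopf fibration `p : S^{2n+1} → ℂP^n`, with `S^{2n+1}`
equipped with the d-structure associated to any d-structure on `ℂP^n`, the directed
parametrized topological complexity equals `2`. -/
theorem vTCp_hopf (n : ℕ) (dB : DStruct (CPSpace n)) :
    vTCp (assocDStruct dB (hopfMap n)) (hopfMap n) = 2 := by
  have hΓ := Hopf.GammaEB_assocDStruct dB
  refine le_antisymm ?_ (two_le_vTCp ?_ fun U hU hsub ↦ ?_)
  · refine vTCp_le_of_cover ![Hopf.phaseNe n (-1), Hopf.phaseNe n 1] (fun i ↦ ?_) ?_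
    · fin_cases i <;> exact ⟨Hopf.isENRSet_phaseNe (by simp),
        dParamSecSet_assocDStruct_iff.2 (Hopf.paramSecSet_phaseNe (by simp))⟩
    · rw [hΓ]
      exact (Hopf.EBE_subset_phaseNe_union (by norm_num : (-1 : ℂ) ≠ 1)).trans <|
        union_subset (subset_iUnion_of_subset 0 subset_rfl) (subset_iUnion_of_subset 1 subset_rfl)
  · obtain ⟨z⟩ : Nonempty (Hopf.Sphere n) := inferInstance
    exact hΓ ▸ ⟨(z, z), rfl⟩
  · exact Hopf.not_paramSecSet_EBE ((dParamSecSet_assocDStruct_iff.1 hU).mono (hΓ ▸ hsub))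

end
end
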